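/- Let w : [0,1]² → ℝ be continuous and define the symmetric kernel h_{φ^w} on X² × X² by h_{φ^w}(x,y) = ½(φ^w(x¹,x²) + φ^w(y¹,y²) − φ^w(x¹,y²) − φ^w(y¹,x²)), where φ^w(a,b) = Σ_{u∈a, v∈b} w(u,v). Then h_{φ^w} is continuous on (X²)² with respect to the product metric d induced by the Skorohod-type metric d_X. -/

import Mathlib

/-!
If `d_X(a, a') < δ ≤ 1`, a time change `λ` witnessing this makes the integer-valued counting
functions agree exactly, `N_a ∘ λ = N_{a'}` on `[0,1]`. A finite set is determined by its counting
function, so `λ` maps `a'` bijectively onto `a` and moves each point by less than `δ`. Thus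
`φ^w(a, b)` and `φ^w(a', b')` are sums over the same index set whose terms differ by at most the
modulus of uniform continuity of `w` on `[0,1]²`, and `h_{φ^w}` is a combination of four values
of `φ^w`.
-/

open Set

/-- The counting function of a finite point configuration `x ⊆ [0,1]`:
`N_x(t) = #{u ∈ x : u ≤ t}`. -/
noncomputable def countFn (x : Finset ℝ) (t : ℝ) : ℝ :=
  ((x.filter (fun u => u ≤ t)).card : ℝ)

/-- A strictly increasing continuous mapping of `[0,1]` onto itself. -/
def IsTimeChange (l : ℝ → ℝ) : Prop :=
  StrictMonoOn l (Set.Icc 0 1) ∧ ContinuousOn l (Set.Icc 0 1) ∧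
    l '' Set.Icc 0 1 = Set.Icc 0 1

/-- The uniform Skorohod metric on (càdlàg) functions on `[0,1]`. -/
noncomputable def dD (f g : ℝ → ℝ) : ℝ :=
  sInf {ε : ℝ | 0 < ε ∧ ∃ l : ℝ → ℝ, IsTimeChange l ∧
    (∀ t ∈ Set.Icc (0:ℝ) 1, |l t - t| ≤ ε) ∧
    (∀ t ∈ Set.Icc (0:ℝ) 1, |f (l t) - g t| ≤ ε)}

/-- The induced metric on finite point configurations. -/
noncomputable def dX (x y : Finset ℝ) : ℝ := dD (countFn x) (countFn y)

/-- The sup product metric on `X² = X × X`. -/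
noncomputable def dX2 (a b : Finset ℝ × Finset ℝ) : ℝ := max (dX a.1 b.1) (dX a.2 b.2)

/-- The sup product metric on `(X²)²`. -/
noncomputable def dXX (p q : (Finset ℝ × Finset ℝ) × (Finset ℝ × Finset ℝ)) : ℝ :=
  max (dX2 p.1 q.1) (dX2 p.2 q.2)

/-- `φ^w(x¹,x²) = Σ_{u ∈ x¹} Σ_{v ∈ x²} w(u,v)`. -/
noncomputable def phiW (w : ℝ → ℝ → ℝ) (x : Finset ℝ × Finset ℝ) : ℝ :=
  ∑ u ∈ x.1, ∑ v ∈ x.2, w u v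

/-- The symmetric kernel `h_{φ^w}`. -/
noncomputable def hPhiW (w : ℝ → ℝ → ℝ) (x y : Finset ℝ × Finset ℝ) : ℝ :=
  (phiW w (x.1, x.2) + phiW w (y.1, y.2) - phiW w (x.1, y.2) - phiW w (y.1, x.2)) / 2

open Finset

lemma countFn_le_card (a : Finset ℝ) (t : ℝ) : countFn a t ≤ #a :=
  Nat.cast_le.2 (card_filter_le _ _)

lemma countFn_eq_of_abs_sub_lt_one {a b : Finset ℝ} {s t : ℝ}
    (h : |countFn a s - countFn b t| < 1) : countFn a s = countFn b t := by
  unfold countFn at h ⊢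
  generalize #(a.filter (· ≤ s)) = p at h ⊢
  generalize #(b.filter (· ≤ t)) = q at h ⊢
  obtain ⟨h₁, h₂⟩ := abs_lt.mp h
  have hpq : p < q + 1 := by exact_mod_cast (show (p : ℝ) < q + 1 by linarith)
  have hqp : q < p + 1 := by exact_mod_cast (show (q : ℝ) < p + 1 by linarith)
  exact_mod_cast (show p = q by omega)

lemma countFn_lt_countFn_of_min_symmDiff {a b : Finset ℝ} {m : ℝ} (ha : m ∈ a) (hb : m ∉ b)
    (hm : ∀ u ∈ symmDiff a b, m ≤ u) : countFn b m < countFn a m := by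
  unfold countFn
  refine Nat.cast_lt.2 (card_lt_card ⟨fun u hu => ?_, fun hsub => ?_⟩)
  · obtain ⟨hub, hum⟩ := mem_filter.1 hu
    refine mem_filter.2 ⟨?_, hum⟩
    by_contra hua
    have hmu : m ≤ u := hm u (mem_symmDiff.2 (Or.inr ⟨hub, hua⟩))
    exact hb (le_antisymm hum hmu ▸ hub)
  · exact hb (mem_filter.1 (hsub (mem_filter.2 ⟨ha, le_rfl⟩))).1

theorem eq_of_countFn_eq {a b : Finset ℝ} (h : ∀ s ∈ a ∪ b, countFn a s = countFn b s) :
    a = b := by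
  by_contra hne
  have hsd : (symmDiff a b).Nonempty := symmDiff_nonempty.2 hne
  set m := (symmDiff a b).min' hsd
  have hm : ∀ u ∈ symmDiff a b, m ≤ u := fun u hu => min'_le _ u hu
  rcases mem_symmDiff.1 (min'_mem _ hsd) with ⟨hma, hmb⟩ | ⟨hmb, hma⟩
  · exact (countFn_lt_countFn_of_min_symmDiff hma hmb hm).ne' (h m (mem_union_left _ hma))
  · rw [symmDiff_comm] at hm
    exact (countFn_lt_countFn_of_min_symmDiff hmb hma hm).ne (h m (mem_union_right _ hmb))

namespace IsTimeChange

variable {l : ℝ → ℝ}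

lemma mapsTo (hl : IsTimeChange l) : MapsTo l (Set.Icc 0 1) (Set.Icc 0 1) :=
  mapsTo_iff_image_subset.2 hl.2.2.subset

lemma surjOn (hl : IsTimeChange l) : SurjOn l (Set.Icc 0 1) (Set.Icc 0 1) :=
  hl.2.2.symm.subset

lemma image_eq_of_countFn_eq (hl : IsTimeChange l) {a a' : Finset ℝ}
    (ha : ∀ u ∈ a, u ∈ Set.Icc (0:ℝ) 1) (ha' : ∀ u ∈ a', u ∈ Set.Icc (0:ℝ) 1)
    (h : ∀ t ∈ Set.Icc (0:ℝ) 1, countFn a (l t) = countFn a' t) : a'.image l = a := by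
  refine (eq_of_countFn_eq fun s hs => ?_).symm
  have hsI : s ∈ Set.Icc (0:ℝ) 1 := by
    rcases mem_union.1 hs with hs | hs
    · exact ha s hs
    · obtain ⟨u, hu, rfl⟩ := mem_image.1 hs
      exact hl.mapsTo (ha' u hu)
  obtain ⟨t, htI, rfl⟩ := hl.surjOn hsI
  rw [h t htI]
  unfold countFn
  rw [filter_image, card_image_of_injOn (hl.1.injOn.mono fun u hu => ha' u (mem_filter.1 hu).1),
    filter_congr fun u hu => hl.1.le_iff_le (ha' u hu) htI]

end IsTimeChange

lemma exists_timeChange_of_dX_lt {a a' : Finset ℝ} {δ : ℝ} (h : dX a a' < δ) :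
    ∃ l, IsTimeChange l ∧ (∀ t ∈ Set.Icc (0:ℝ) 1, |l t - t| < δ) ∧
      ∀ t ∈ Set.Icc (0:ℝ) 1, |countFn a (l t) - countFn a' t| < δ := by
  have hne : {ε : ℝ | 0 < ε ∧ ∃ l : ℝ → ℝ, IsTimeChange l ∧
      (∀ t ∈ Set.Icc (0:ℝ) 1, |l t - t| ≤ ε) ∧
      (∀ t ∈ Set.Icc (0:ℝ) 1, |countFn a (l t) - countFn a' t| ≤ ε)}.Nonempty := by
    have hid : IsTimeChange id := ⟨strictMonoOn_id, continuousOn_id, image_id _⟩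
    refine ⟨#a + #a' + 1, by positivity, id, hid, fun t _ => ?_, fun t _ => ?_⟩
    · simp only [id, sub_self, abs_zero]
      positivity
    · exact abs_sub_le_of_nonneg_of_le (Nat.cast_nonneg _)
        (by linarith [countFn_le_card a (id t)]) (Nat.cast_nonneg _)
        (by linarith [countFn_le_card a' t])
  obtain ⟨ε, ⟨-, l, hl, hlt, hcount⟩, hεδ⟩ := exists_lt_of_csInf_lt hne h
  exact ⟨l, hl, fun t ht => (hlt t ht).trans_lt hεδ, fun t ht => (hcount t ht).trans_lt hεδ⟩

lemma exists_matching_of_dX_lt {a a' : Finset ℝ} {δ : ℝ} (hδ : δ ≤ 1)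
    (ha : ∀ u ∈ a, u ∈ Set.Icc (0:ℝ) 1) (ha' : ∀ u ∈ a', u ∈ Set.Icc (0:ℝ) 1) (h : dX a a' < δ) :
    ∃ l : ℝ → ℝ, InjOn l a' ∧ a'.image l = a ∧ ∀ u ∈ a', |l u - u| < δ := by
  obtain ⟨l, hl, hlt, hcount⟩ := exists_timeChange_of_dX_lt h
  refine ⟨l, hl.1.injOn.mono fun u hu => ha' u hu, ?_, fun u hu => hlt u (ha' u hu)⟩
  exact hl.image_eq_of_countFn_eq ha ha' fun t ht =>
    countFn_eq_of_abs_sub_lt_one ((hcount t ht).trans_le hδ)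

lemma phiW_image (w : ℝ → ℝ → ℝ) {a b : Finset ℝ} {la lb : ℝ → ℝ} (hla : InjOn la a)
    (hlb : InjOn lb b) :
    phiW w (a.image la, b.image lb) = ∑ u ∈ a, ∑ v ∈ b, w (la u) (lb v) := by
  simp only [phiW, sum_image hla, sum_image hlb]

lemma abs_phiW_image_sub_le (w : ℝ → ℝ → ℝ) {a b : Finset ℝ} {la lb : ℝ → ℝ} {ε : ℝ}
    (hla : InjOn la a) (hlb : InjOn lb b)
    (hε : ∀ u ∈ a, ∀ v ∈ b, |w (la u) (lb v) - w u v| ≤ ε) :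
    |phiW w (a.image la, b.image lb) - phiW w (a, b)| ≤ #a * #b * ε := by
  calc |phiW w (a.image la, b.image lb) - phiW w (a, b)|
      = |∑ p ∈ a ×ˢ b, (w (la p.1) (lb p.2) - w p.1 p.2)| := by
        rw [phiW_image w hla hlb, phiW, sum_sub_distrib, sum_product, sum_product]
    _ ≤ ∑ p ∈ a ×ˢ b, |w (la p.1) (lb p.2) - w p.1 p.2| := abs_sum_le_sum_abs _ _
    _ ≤ #(a ×ˢ b) • ε := sum_le_card_nsmul _ _ _ fun p hp =>
        hε p.1 (mem_product.1 hp).1 p.2 (mem_product.1 hp).2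
    _ = #a * #b * ε := by rw [card_product, nsmul_eq_mul]; push_cast; ring

theorem exists_abs_phiW_sub_le {w : ℝ → ℝ → ℝ}
    (hw : ContinuousOn (fun p : ℝ × ℝ => w p.1 p.2) (Set.Icc 0 1 ×ˢ Set.Icc 0 1)) {a b : Finset ℝ}
    (ha : ∀ u ∈ a, u ∈ Set.Icc (0:ℝ) 1) (hb : ∀ v ∈ b, v ∈ Set.Icc (0:ℝ) 1) :
    ∀ ε > 0, ∃ η > 0, ∀ a' b' : Finset ℝ,
      (∀ u ∈ a', u ∈ Set.Icc (0:ℝ) 1) → (∀ v ∈ b', v ∈ Set.Icc (0:ℝ) 1) →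
      dX a a' ≤ η → dX b b' ≤ η → |phiW w (a', b') - phiW w (a, b)| ≤ ε := by
  intro ε hε
  set ε₀ := ε / (#a * #b + 1)
  obtain ⟨δ, hδ, hwδ⟩ := Metric.uniformContinuousOn_iff.1
    ((isCompact_Icc.prod isCompact_Icc).uniformContinuousOn_of_continuous hw) ε₀ (by positivity)
  refine ⟨min δ 1 / 2, by positivity, fun a' b' ha' hb' hda hdb => ?_⟩
  have hη : min δ 1 / 2 < min δ 1 := by linarith [lt_min hδ one_pos]
  obtain ⟨la, hla, hima, hla'⟩ :=
    exists_matching_of_dX_lt (min_le_right δ 1) ha ha' (hda.trans_lt hη)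
  obtain ⟨lb, hlb, himb, hlb'⟩ :=
    exists_matching_of_dX_lt (min_le_right δ 1) hb hb' (hdb.trans_lt hη)
  have hclose : ∀ u ∈ a', ∀ v ∈ b', |w (la u) (lb v) - w u v| ≤ ε₀ := by
    intro u hu v hv
    have hdist : dist (la u, lb v) (u, v) < δ := by
      rw [Prod.dist_eq, Real.dist_eq, Real.dist_eq]
      exact max_lt ((hla' u hu).trans_le (min_le_left _ _))
        ((hlb' v hv).trans_le (min_le_left _ _))
    refine (hwδ (la u, lb v) ⟨ha _ ?_, hb _ ?_⟩ (u, v) ⟨ha' u hu, hb' v hv⟩ hdist).le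
    · exact hima ▸ mem_image_of_mem la hu
    · exact himb ▸ mem_image_of_mem lb hv
  calc |phiW w (a', b') - phiW w (a, b)|
      = |phiW w (a'.image la, b'.image lb) - phiW w (a', b')| := by
        rw [hima, himb, abs_sub_comm]
    _ ≤ #a' * #b' * ε₀ := abs_phiW_image_sub_le w hla hlb hclose
    _ = #a * #b * ε₀ := by rw [← hima, ← himb, card_image_of_injOn hla, card_image_of_injOn hlb]
    _ ≤ ε := by
        rw [mul_div_assoc', div_le_iff₀ (by positivity)]
        nlinarith

/-- If `w` is continuous on `[0,1]²`, then `h_{φ^w}` is continuous on `(X²)²` for the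
product metric `d` (ε-η formulation at every point with configurations in `[0,1]`). -/
theorem stmt_3 (w : ℝ → ℝ → ℝ)
    (hw : ContinuousOn (fun p : ℝ × ℝ => w p.1 p.2) (Set.Icc 0 1 ×ˢ Set.Icc 0 1))
    (x y : Finset ℝ × Finset ℝ)
    (hx1 : ∀ u ∈ x.1, u ∈ Set.Icc (0:ℝ) 1) (hx2 : ∀ v ∈ x.2, v ∈ Set.Icc (0:ℝ) 1)
    (hy1 : ∀ u ∈ y.1, u ∈ Set.Icc (0:ℝ) 1) (hy2 : ∀ v ∈ y.2, v ∈ Set.Icc (0:ℝ) 1) :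
    ∀ ε > 0, ∃ η > 0, ∀ x' y' : Finset ℝ × Finset ℝ,
      (∀ u ∈ x'.1, u ∈ Set.Icc (0:ℝ) 1) → (∀ v ∈ x'.2, v ∈ Set.Icc (0:ℝ) 1) →
      (∀ u ∈ y'.1, u ∈ Set.Icc (0:ℝ) 1) → (∀ v ∈ y'.2, v ∈ Set.Icc (0:ℝ) 1) →
      dXX (x, y) (x', y') ≤ η → |hPhiW w x' y' - hPhiW w x y| ≤ ε := by
  intro ε hε
  obtain ⟨η₁, hη₁, hxx⟩ := exists_abs_phiW_sub_le hw hx1 hx2 (ε / 2) (by positivity)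
  obtain ⟨η₂, hη₂, hyy⟩ := exists_abs_phiW_sub_le hw hy1 hy2 (ε / 2) (by positivity)
  obtain ⟨η₃, hη₃, hxy⟩ := exists_abs_phiW_sub_le hw hx1 hy2 (ε / 2) (by positivity)
  obtain ⟨η₄, hη₄, hyx⟩ := exists_abs_phiW_sub_le hw hy1 hx2 (ε / 2) (by positivity)
  refine ⟨min (min η₁ η₂) (min η₃ η₄), by positivity, fun x' y' hx1' hx2' hy1' hy2' hd => ?_⟩
  simp only [dXX, dX2, max_le_iff] at hd
  obtain ⟨⟨hdx₁, hdx₂⟩, hdy₁, hdy₂⟩ := hd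
  have h₁ := abs_le.1 (hxx x'.1 x'.2 hx1' hx2' (hdx₁.trans (by simp)) (hdx₂.trans (by simp)))
  have h₂ := abs_le.1 (hyy y'.1 y'.2 hy1' hy2' (hdy₁.trans (by simp)) (hdy₂.trans (by simp)))
  have h₃ := abs_le.1 (hxy x'.1 y'.2 hx1' hy2' (hdx₁.trans (by simp)) (hdy₂.trans (by simp)))
  have h₄ := abs_le.1 (hyx y'.1 x'.2 hy1' hx2' (hdy₁.trans (by simp)) (hdx₂.trans (by simp)))
  rw [hPhiW, hPhiW, abs_le]
  constructor <;> linarith [h₁.1, h₁.2, h₂.1, h₂.2, h₃.1, h₃.2, h₄.1, h₄.2]
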